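/- The subsets T1 = {2(−2+ω)x + 14y : x, y ∈ Z} and T2 = {(5+ω)x + 28y : x, y ∈ Z} of the Eisenstein integers are additive subgroups contained in the ideal I generated by 2 − ω, and the quotient groups Z[ω]/T1 and Z[ω]/T2 are isomorphic to Z/2 ⊕ Z/14 and Z/28 respectively. -/

import Mathlib

/-!
In the basis `1, ω`, the map `a + bω ↦ (b mod 2, a + 2b mod 14)` is a surjection
`ℤ[ω] → ℤ/2 × ℤ/14` whose kernel is spanned by `2(−2+ω) = −4 + 2ω` and `14`, and
`a + bω ↦ a − 5b mod 28` is a surjection onto `ℤ/28` with kernel spanned by `5 + ω` and `28`.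
All four generators are multiples of `2 − ω`, since `14 = (2 − ω)(6 + 2ω)` and
`5 + ω = (2 − ω)(2 + ω)`.
-/

open Polynomial

/-- The Eisenstein integers `ℤ[ω]`, where `ω² + ω + 1 = 0`. -/
noncomputable abbrev Eisenstein : Type := AdjoinRoot (X ^ 2 + X + 1 : ℤ[X])

/-- The primitive cube root of unity `ω` in `ℤ[ω]`. -/
noncomputable def eisω : Eisenstein := AdjoinRoot.root _

/-- The additive subgroup `T1 = {2(−2+ω)x + 14y : x, y ∈ ℤ}`. -/
noncomputable def T1 : AddSubgroup Eisenstein :=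
  AddSubgroup.closure {2 * (-2 + eisω), 14}

/-- The additive subgroup `T2 = {(5+ω)x + 28y : x, y ∈ ℤ}`. -/
noncomputable def T2 : AddSubgroup Eisenstein :=
  AddSubgroup.closure {5 + eisω, 28}

lemma eisω_sq_add_eisω_add_one : eisω ^ 2 + eisω + 1 = 0 := by
  have h : AdjoinRoot.mk (X ^ 2 + X + 1 : ℤ[X]) (X ^ 2 + X + 1) = 0 := AdjoinRoot.mk_self
  simpa only [eisω, map_add, map_pow, map_one, AdjoinRoot.mk_X] using h

noncomputable def eisensteinBasis : Module.Basis (Fin 2) ℤ Eisenstein :=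
  (AdjoinRoot.powerBasis' (by monicity! : (X ^ 2 + X + 1 : ℤ[X]).Monic)).basis.reindex
    (finCongr (by compute_degree! : (X ^ 2 + X + 1 : ℤ[X]).natDegree = 2))

lemma eisensteinBasis_apply (i : Fin 2) : eisensteinBasis i = eisω ^ (i : ℕ) := by
  rw [eisensteinBasis, Module.Basis.reindex_apply, PowerBasis.basis_eq_pow]
  rfl

lemma exists_eq_zsmul_one_add_zsmul_eisω (z : Eisenstein) :
    ∃ a b : ℤ, z = a • (1 : Eisenstein) + b • eisω :=
  ⟨eisensteinBasis.repr z 0, eisensteinBasis.repr z 1, by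
    simpa [Fin.sum_univ_two, eisensteinBasis_apply] using (eisensteinBasis.sum_repr z).symm⟩

section Lift

variable {M : Type*} [AddCommGroup M] (u v : M)

noncomputable def eisLift : Eisenstein →+ M :=
  (eisensteinBasis.constr ℤ ![u, v]).toAddMonoidHom

lemma eisLift_one : eisLift u v 1 = u := by
  simpa only [eisLift, LinearMap.toAddMonoidHom_coe, eisensteinBasis_apply, Fin.val_zero, pow_zero,
    Matrix.cons_val_zero] using
    eisensteinBasis.constr_basis ℤ ![u, v] 0

lemma eisLift_eisω : eisLift u v eisω = v := by
  simpa only [eisLift, LinearMap.toAddMonoidHom_coe, eisensteinBasis_apply, Fin.val_one, pow_one,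
    Matrix.cons_val_one, Matrix.cons_val_fin_one] using
    eisensteinBasis.constr_basis ℤ ![u, v] 1

lemma eisLift_zsmul_one_add_zsmul_eisω (a b : ℤ) :
    eisLift u v (a • (1 : Eisenstein) + b • eisω) = a • u + b • v := by
  rw [map_add, map_zsmul, map_zsmul, eisLift_one, eisLift_eisω]

end Lift

lemma AddSubgroup.coe_closure_pair {G : Type*} [AddCommGroup G] (a b : G) :
    (closure {a, b} : Set G) = {z | ∃ x y : ℤ, z = x • a + y • b} := by
  ext z
  simp only [SetLike.mem_coe, mem_closure_pair, Set.mem_ofPred_eq]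
  exact exists₂_congr fun _ _ => eq_comm

lemma AddSubgroup.coe_closure_pair_subset_ideal {R : Type*} [Ring R] {I : Ideal R} {a b : R}
    (ha : a ∈ I) (hb : b ∈ I) : (closure {a, b} : Set R) ⊆ I :=
  (closure_le I.toAddSubgroup).mpr (Set.insert_subset ha (Set.singleton_subset_iff.mpr hb))

lemma AddMonoidHom.ker_eq_closure_pair {G H : Type*} [AddCommGroup G] [AddGroup H] (ψ : G →+ H)
    {a b : G} (ha : ψ a = 0) (hb : ψ b = 0) (h : ∀ z, ψ z = 0 → ∃ x y : ℤ, x • a + y • b = z) :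
    ψ.ker = AddSubgroup.closure {a, b} :=
  le_antisymm (fun z hz ↦ AddSubgroup.mem_closure_pair.mpr (h z hz))
    ((AddSubgroup.closure_le _).mpr (Set.insert_subset ha (Set.singleton_subset_iff.mpr hb)))

lemma QuotientAddGroup.nonempty_addEquiv_of_ker_eq {G H : Type*} [AddCommGroup G] [AddGroup H]
    {T : AddSubgroup G} (ψ : G →+ H) (hker : ψ.ker = T) (hψ : Function.Surjective ψ) :
    Nonempty (G ⧸ T ≃+ H) :=
  ⟨(quotientAddEquivOfEq hker.symm).trans (quotientKerEquivOfSurjective ψ hψ)⟩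

noncomputable def projT1 : Eisenstein →+ ZMod 2 × ZMod 14 := eisLift (0, 1) (1, 2)

noncomputable def projT2 : Eisenstein →+ ZMod 28 := eisLift 1 (-5)

lemma projT1_apply (a b : ℤ) :
    projT1 (a • (1 : Eisenstein) + b • eisω) = ((b : ZMod 2), ((a + 2 * b : ℤ) : ZMod 14)) := by
  rw [projT1, eisLift_zsmul_one_add_zsmul_eisω]
  ext <;> simp [zsmul_eq_mul, mul_comm]

lemma projT2_apply (a b : ℤ) :
    projT2 (a • (1 : Eisenstein) + b • eisω) = ((a - 5 * b : ℤ) : ZMod 28) := by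
  rw [projT2, eisLift_zsmul_one_add_zsmul_eisω]
  simp [zsmul_eq_mul, sub_eq_add_neg, mul_comm]

lemma ker_projT1 : projT1.ker = T1 := by
  refine projT1.ker_eq_closure_pair ?_ ?_ ?_
  · have h : 2 * (-2 + eisω) = (-4 : ℤ) • (1 : Eisenstein) + (2 : ℤ) • eisω := by
      simp only [zsmul_eq_mul]; push_cast; ring
    rw [h, projT1_apply]
    decide
  · have h : (14 : Eisenstein) = (14 : ℤ) • (1 : Eisenstein) + (0 : ℤ) • eisω := by simp
    rw [h, projT1_apply]
    decide
  · intro z hz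
    obtain ⟨a, b, rfl⟩ := exists_eq_zsmul_one_add_zsmul_eisω z
    rw [projT1_apply, Prod.mk_eq_zero, ZMod.intCast_zmod_eq_zero_iff_dvd,
      ZMod.intCast_zmod_eq_zero_iff_dvd] at hz
    obtain ⟨⟨k, rfl⟩, m, hm⟩ := hz
    obtain rfl : a = 14 * m - 4 * k := by omega
    refine ⟨k, m, ?_⟩
    simp only [zsmul_eq_mul]
    push_cast
    ring

lemma ker_projT2 : projT2.ker = T2 := by
  refine projT2.ker_eq_closure_pair ?_ ?_ ?_
  · have h : 5 + eisω = (5 : ℤ) • (1 : Eisenstein) + (1 : ℤ) • eisω := by simp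
    rw [h, projT2_apply]
    decide
  · have h : (28 : Eisenstein) = (28 : ℤ) • (1 : Eisenstein) + (0 : ℤ) • eisω := by simp
    rw [h, projT2_apply]
    decide
  · intro z hz
    obtain ⟨a, b, rfl⟩ := exists_eq_zsmul_one_add_zsmul_eisω z
    rw [projT2_apply, ZMod.intCast_zmod_eq_zero_iff_dvd] at hz
    obtain ⟨m, hm⟩ := hz
    obtain rfl : a = 28 * m + 5 * b := by omega
    refine ⟨b, m, ?_⟩
    simp only [zsmul_eq_mul]
    push_cast
    ring

lemma projT1_surjective : Function.Surjective projT1 := by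
  rintro ⟨u, w⟩
  obtain ⟨p, rfl⟩ := ZMod.intCast_surjective u
  obtain ⟨q, rfl⟩ := ZMod.intCast_surjective w
  exact ⟨(q - 2 * p) • 1 + p • eisω, by rw [projT1_apply]; ring_nf⟩

lemma projT2_surjective : Function.Surjective projT2 := by
  intro u
  obtain ⟨q, rfl⟩ := ZMod.intCast_surjective u
  exact ⟨q • 1 + (0 : ℤ) • eisω, by rw [projT2_apply]; ring_nf⟩

theorem stmt13 :
    -- `T1` and `T2` consist exactly of the stated integer combinations
    ((T1 : Set Eisenstein) =
      {z | ∃ x y : ℤ, z = x • (2 * (-2 + eisω)) + y • (14 : Eisenstein)}) ∧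
    ((T2 : Set Eisenstein) =
      {z | ∃ x y : ℤ, z = x • (5 + eisω) + y • (28 : Eisenstein)}) ∧
    -- both are contained in the ideal generated by `2 − ω`
    (T1 : Set Eisenstein) ⊆ (Ideal.span {2 - eisω} : Ideal Eisenstein) ∧
    (T2 : Set Eisenstein) ⊆ (Ideal.span {2 - eisω} : Ideal Eisenstein) ∧
    -- the quotients are `ℤ/2 ⊕ ℤ/14` and `ℤ/28`
    Nonempty (Eisenstein ⧸ T1 ≃+ ZMod 2 × ZMod 14) ∧
    Nonempty (Eisenstein ⧸ T2 ≃+ ZMod 28) := by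
  have hω := eisω_sq_add_eisω_add_one
  refine ⟨AddSubgroup.coe_closure_pair _ _, AddSubgroup.coe_closure_pair _ _,
    AddSubgroup.coe_closure_pair_subset_ideal ?_ ?_, AddSubgroup.coe_closure_pair_subset_ideal ?_ ?_,
    QuotientAddGroup.nonempty_addEquiv_of_ker_eq projT1 ker_projT1 projT1_surjective,
    QuotientAddGroup.nonempty_addEquiv_of_ker_eq projT2 ker_projT2 projT2_surjective⟩
  all_goals rw [Ideal.mem_span_singleton']
  · exact ⟨-2, by ring⟩
  · exact ⟨6 + 2 * eisω, by linear_combination -2 * hω⟩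
  · exact ⟨2 + eisω, by linear_combination -hω⟩
  · exact ⟨12 + 4 * eisω, by linear_combination -4 * hω⟩
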